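/- arXiv:1002.4813 — 2 statements merged into one kernel-verified Lean document; each statement's English description precedes it below -/
import Mathlib

section
/- If ρ:(0,∞)→(0,∞) is regular and submultiplicative, then the lower index α(ρ) := sup_{x∈(0,1)} log ρ(x)/log x equals the limit as x→0 of log ρ(x)/log x. -/
open Set Filter

noncomputable section

/-- `ρ` is submultiplicative on `(0,∞)`. -/
def Submult (ρ : ℝ → ℝ) : Prop := ∀ x y : ℝ, 0 < x → 0 < y → ρ (x * y) ≤ ρ x * ρ y

/-- `ρ` is regular: bounded from above in some open neighborhood of `1`. -/
def RegularFn (ρ : ℝ → ℝ) : Prop := ∃ ε > (0:ℝ), ∃ M : ℝ, ∀ x : ℝ, |x - 1| < ε → ρ x ≤ M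

/-- Lower index `α(ρ) = sup_{0<x<1} log ρ(x) / log x`. -/
def alphaIdx (ρ : ℝ → ℝ) : ℝ := sSup ((fun x => Real.log (ρ x) / Real.log x) '' Ioo (0:ℝ) 1)

/-- Upper index `β(ρ) = inf_{x>1} log ρ(x) / log x`. -/
def betaIdx (ρ : ℝ → ℝ) : ℝ := sInf ((fun x => Real.log (ρ x) / Real.log x) '' Ioi (1:ℝ))

/-! With `g t = log (ρ (exp t))`, submultiplicativity of `ρ` is subadditivity of `g` on `ℝ` and
`α(ρ) = sup_{t<0} g t / t`. Regularity bounds `g` near `0`, and subadditivity spreads this to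
`g s ≤ A |s| + B`; together with `g 0 ≤ g (n t) + g (-n t)` this bounds the supremum. Writing
`t = ⌊t/t₀⌋ t₀ + r` with `r ∈ (t₀, 0]` gives `g t / t ≥ (⌊t/t₀⌋ t₀ / t) (g t₀ / t₀) + O(1/|t|)`,
so `g t / t` tends to the supremum as `t → -∞`, i.e. as `x = exp t → 0⁺`. -/

open Real Topology

section Subadditive

variable {g : ℝ → ℝ}

lemma zero_le_of_subadditive (hg : ∀ s t, g (s + t) ≤ g s + g t) : 0 ≤ g 0 := by
  simpa using hg 0 0

lemma le_nat_mul_add_of_subadditive (hg : ∀ s t, g (s + t) ≤ g s + g t) (n : ℕ) (t s : ℝ) :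
    g (n * t + s) ≤ n * g t + g s := by
  induction n with
  | zero => simp
  | succ n ih =>
    calc g ((n + 1 : ℕ) * t + s) = g (t + (n * t + s)) := by push_cast; ring_nf
      _ ≤ g t + g (n * t + s) := hg _ _
      _ ≤ (n + 1 : ℕ) * g t + g s := by push_cast; linarith

lemma exists_le_mul_abs_add_of_subadditive (hg : ∀ s t, g (s + t) ≤ g s + g t) {M : ℝ}
    (hM : ∀ᶠ s in 𝓝 0, g s ≤ M) : ∃ A ≥ 0, ∃ B, ∀ s, g s ≤ A * |s| + B := by
  obtain ⟨ε, hε, hεM⟩ := Metric.eventually_nhds_iff.1 hM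
  have hg0 : g 0 ≤ M := hεM (by simpa using hε)
  have hM0 : 0 ≤ M := (zero_le_of_subadditive hg).trans hg0
  refine ⟨M / ε, by positivity, 2 * M, fun s => ?_⟩
  set n := ⌊|s| / ε⌋₊ + 1
  have hn : (0 : ℝ) < n := by positivity
  have hsn : |s| / ε < n := by simpa [n] using Nat.lt_floor_add_one (|s| / ε)
  have hns : (n : ℝ) ≤ |s| / ε + 1 := by
    simp only [n, Nat.cast_add, Nat.cast_one, add_le_add_iff_right]
    exact Nat.floor_le (by positivity)
  have hsmall : g (s / n) ≤ M := hεM <| by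
    rw [Real.dist_eq, sub_zero, abs_div, Nat.abs_cast, div_lt_iff₀ hn]
    rwa [div_lt_iff₀ hε, mul_comm] at hsn
  calc g s = g (n * (s / n) + 0) := by rw [add_zero, mul_div_cancel₀ _ hn.ne']
    _ ≤ n * g (s / n) + g 0 := le_nat_mul_add_of_subadditive hg n _ _
    _ ≤ n * M + M := by gcongr
    _ ≤ (|s| / ε + 1) * M + M := by gcongr
    _ = M / ε * |s| + 2 * M := by ring

lemma div_le_add_of_subadditive (hg : ∀ s t, g (s + t) ≤ g s + g t) {A B : ℝ}
    (hAB : ∀ s, g s ≤ A * |s| + B) {t : ℝ} (ht : t < 0) : g t / t ≤ A + B := by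
  have hB : 0 ≤ B := by simpa using (zero_le_of_subadditive hg).trans (hAB 0)
  set n := ⌈(-t)⁻¹⌉₊
  have htn : 1 ≤ n * -t := by
    rw [← inv_le_iff_one_le_mul₀ (by linarith)]; exact Nat.le_ceil _
  have hn : (0 : ℝ) < n := by nlinarith
  have hlow : g 0 ≤ n * g t + (A * (n * -t) + B) := by
    calc g 0 = g (n * t + -(n * t)) := by ring_nf
      _ ≤ n * g t + g (-(n * t)) := le_nat_mul_add_of_subadditive hg n _ _
      _ ≤ n * g t + (A * (n * -t) + B) := by
        have := hAB (-(n * t))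
        rw [abs_of_pos (by nlinarith)] at this
        linarith
  rw [div_le_iff_of_neg ht]
  nlinarith [zero_le_of_subadditive hg]

lemma le_floor_mul_add_of_subadditive (hg : ∀ s t, g (s + t) ≤ g s + g t) {A B : ℝ}
    (hA : 0 ≤ A) (hAB : ∀ s, g s ≤ A * |s| + B) {t t₀ : ℝ} (ht : t < 0) (ht₀ : t₀ < 0) :
    g t ≤ ⌊t / t₀⌋₊ * g t₀ + (A * -t₀ + B) := by
  set n := ⌊t / t₀⌋₊
  have hn_le : t ≤ n * t₀ := by
    have := Nat.floor_le (div_nonneg_of_nonpos ht.le ht₀.le)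
    rwa [le_div_iff_of_neg ht₀] at this
  have hn_lt : ((n : ℝ) + 1) * t₀ < t := by
    have := Nat.lt_floor_add_one (t / t₀)
    rwa [div_lt_iff_of_neg ht₀] at this
  calc g t = g (n * t₀ + (t - n * t₀)) := by ring_nf
    _ ≤ n * g t₀ + g (t - n * t₀) := le_nat_mul_add_of_subadditive hg n _ _
    _ ≤ n * g t₀ + (A * |t - n * t₀| + B) := by gcongr; exact hAB _
    _ ≤ n * g t₀ + (A * -t₀ + B) := by
      gcongr
      rw [abs_of_nonpos (by linarith)]
      linarith

theorem tendsto_div_atBot_of_subadditive (hg : ∀ s t, g (s + t) ≤ g s + g t) {M : ℝ}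
    (hM : ∀ᶠ s in 𝓝 0, g s ≤ M) :
    Tendsto (fun t => g t / t) atBot (𝓝 (sSup ((fun t => g t / t) '' Iio 0))) := by
  obtain ⟨A, hA, B, hAB⟩ := exists_le_mul_abs_add_of_subadditive hg hM
  have hbdd : BddAbove ((fun t => g t / t) '' Iio 0) :=
    ⟨A + B, forall_mem_image.2 fun t ht => div_le_add_of_subadditive hg hAB ht⟩
  have hne : ((fun t => g t / t) '' Iio 0).Nonempty := nonempty_Iio.image _
  refine tendsto_order.2 ⟨fun a ha => ?_, fun a ha => ?_⟩
  · obtain ⟨_, ⟨t₀, ht₀ : t₀ < 0, rfl⟩, hat₀⟩ := exists_lt_of_lt_csSup hne ha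
    have hx : Tendsto (fun t => t / t₀) atBot atTop :=
      (tendsto_div_const_atTop_of_neg ht₀).2 tendsto_id
    have hlim : Tendsto (fun t => ⌊t / t₀⌋₊ / (t / t₀) * (g t₀ / t₀) + (A * -t₀ + B) / t)
        atBot (𝓝 (1 * (g t₀ / t₀) + 0)) :=
      ((tendsto_nat_floor_div_atTop.comp hx).mul_const _).add
        (tendsto_const_nhds.div_atBot tendsto_id)
    rw [one_mul, add_zero] at hlim
    filter_upwards [hlim.eventually (lt_mem_nhds hat₀), eventually_lt_atBot 0] with t hlt ht
    refine hlt.trans_le ?_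
    rw [le_div_iff_of_neg ht]
    calc g t ≤ ⌊t / t₀⌋₊ * g t₀ + (A * -t₀ + B) :=
          le_floor_mul_add_of_subadditive hg hA hAB ht ht₀
      _ = _ := by field_simp [ht.ne, ht₀.ne]
  · filter_upwards [eventually_lt_atBot 0] with t ht
    exact (le_csSup hbdd ⟨t, ht, rfl⟩).trans_lt ha

end Subadditive

lemma Submult.log_comp_exp_subadditive {ρ : ℝ → ℝ} (hpos : ∀ x : ℝ, 0 < x → 0 < ρ x)
    (hsub : Submult ρ) (s t : ℝ) :
    log (ρ (exp (s + t))) ≤ log (ρ (exp s)) + log (ρ (exp t)) := by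
  rw [exp_add, ← log_mul (hpos _ (exp_pos s)).ne' (hpos _ (exp_pos t)).ne']
  exact log_le_log (hpos _ (by positivity)) (hsub _ _ (exp_pos s) (exp_pos t))

lemma RegularFn.eventually_log_comp_exp_le {ρ : ℝ → ℝ} (hpos : ∀ x : ℝ, 0 < x → 0 < ρ x)
    (hreg : RegularFn ρ) : ∃ M, ∀ᶠ s in 𝓝 0, log (ρ (exp s)) ≤ M := by
  obtain ⟨ε, hε, M, hM⟩ := hreg
  have hρ : ∀ᶠ x in 𝓝 1, ρ x ≤ M :=
    Metric.eventually_nhds_iff.2 ⟨ε, hε, fun {x} hx => hM x (by rwa [Real.dist_eq] at hx)⟩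
  have hexp : Tendsto exp (𝓝 0) (𝓝 1) := by simpa using continuous_exp.tendsto 0
  exact ⟨log M, (hexp.eventually hρ).mono fun s hs => log_le_log (hpos _ (exp_pos s)) hs⟩

/-- If `ρ : (0,∞) → (0,∞)` is regular and submultiplicative, then the lower index
`α(ρ) = sup_{0<x<1} log ρ(x)/log x` equals the limit of `log ρ(x)/log x` as `x → 0⁺`. -/
theorem tendsto_alphaIdx (ρ : ℝ → ℝ) (hpos : ∀ x : ℝ, 0 < x → 0 < ρ x)
    (hsub : Submult ρ) (hreg : RegularFn ρ) :
    Tendsto (fun x => Real.log (ρ x) / Real.log x) (nhdsWithin 0 (Ioi 0))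
      (nhds (alphaIdx ρ)) := by
  set φ : ℝ → ℝ := fun t => log (ρ (exp t)) / t
  have hφ : ∀ x ∈ Ioi (0 : ℝ), log (ρ x) / log x = φ (log x) := fun x hx => by
    simp only [φ, exp_log hx]
  obtain ⟨M, hM⟩ := hreg.eventually_log_comp_exp_le hpos
  have hα : alphaIdx ρ = sSup (φ '' Iio 0) := by
    have hlog : log '' Ioo 0 1 = Iio 0 := by
      rw [image_log_Ioo_zero one_pos, log_one]
    rw [alphaIdx, ← hlog, image_image]
    exact congrArg sSup (image_congr fun x (hx : x ∈ Ioo 0 1) => hφ x hx.1)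
  rw [hα]
  refine ((tendsto_div_atBot_of_subadditive (hsub.log_comp_exp_subadditive hpos) hM).comp
    tendsto_log_nhdsGT_zero).congr' ?_
  filter_upwards [self_mem_nhdsWithin] with x hx using (hφ x hx).symm
end
end

section
/- If ρ:(0,∞)→(0,∞) is regular and submultiplicative, then −∞ < α(ρ) ≤ β(ρ) < +∞, where α(ρ) = sup_{x∈(0,1)} log ρ(x)/log x and β(ρ) = inf_{x∈(1,∞)} log ρ(x)/log x. -/
/-!
In logarithmic coordinates `f u = log ρ (exp u)` is subadditive on `ℝ` and, by regularity, bounded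
above near `0`; writing `r = n * (r / n)` it is then bounded above, and via `f 0 ≤ f r + f (-r)`
below, on every bounded interval. For `s < 0 < t` and every `m ≥ 1` choose `n` with
`r = m s + n t ∈ [0, t)`; then `f r ≤ m f s + n f t` together with the lower bound on `[0, t)`
gives `m (t f s - s f t) ≥ -C` with `C` independent of `m`, so `f s / s ≤ f t / t`.
With `x = exp s` and `y = exp t` this is `log ρ x / log x ≤ log ρ y / log y` for all
`0 < x < 1 < y`, which gives all three claims.
-/

open Set

noncomputable section

lemma nonneg_of_forall_natCast_mul_ge {a c : ℝ} (h : ∀ m : ℕ, 0 < m → c ≤ m * a) : 0 ≤ a := by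
  by_contra! ha
  obtain ⟨m, hm⟩ := exists_nat_gt (max (c / a) 0)
  have hm0 : (0 : ℝ) < m := (le_max_right _ _).trans_lt hm
  have := (div_lt_iff_of_neg ha).mp ((le_max_left _ _).trans_lt hm)
  linarith [h m (by exact_mod_cast hm0)]

section Subadditive

variable {f : ℝ → ℝ}

lemma natCast_mul_le_of_subadditive (hf : ∀ u v, f (u + v) ≤ f u + f v) {n : ℕ} (hn : 0 < n)
    (u : ℝ) : f (n * u) ≤ n * f u := by
  induction n, hn using Nat.le_induction with
  | base => simp
  | succ n _ ih =>
    calc f ((n + 1 : ℕ) * u) = f (n * u + u) := by push_cast; ring_nf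
      _ ≤ n * f u + f u := (hf _ _).trans (by linarith)
      _ = (n + 1 : ℕ) * f u := by push_cast; ring

lemma exists_forall_abs_lt_le_of_subadditive (hf : ∀ u v, f (u + v) ≤ f u + f v) {δ K : ℝ}
    (hδ : 0 < δ) (hK : ∀ u, |u| < δ → f u ≤ K) (R : ℝ) : ∃ C, ∀ r, |r| < R → f r ≤ C := by
  obtain ⟨n, hn⟩ := exists_nat_gt (R / δ)
  refine ⟨(n + 1 : ℕ) * K, fun r hr => ?_⟩
  have hn1 : (0 : ℝ) < (n + 1 : ℕ) := by positivity
  have hsmall : |r / (n + 1 : ℕ)| < δ := by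
    rw [abs_div, abs_of_pos hn1, div_lt_iff₀ hn1]
    have := (div_lt_iff₀ hδ).mp hn
    push_cast
    nlinarith
  calc f r = f ((n + 1 : ℕ) * (r / (n + 1 : ℕ))) := by rw [mul_div_cancel₀ _ hn1.ne']
    _ ≤ (n + 1 : ℕ) * f (r / (n + 1 : ℕ)) := natCast_mul_le_of_subadditive hf n.succ_pos _
    _ ≤ (n + 1 : ℕ) * K := mul_le_mul_of_nonneg_left (hK _ hsmall) hn1.le

lemma exists_forall_abs_lt_ge_of_subadditive (hf : ∀ u v, f (u + v) ≤ f u + f v) {δ K : ℝ}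
    (hδ : 0 < δ) (hK : ∀ u, |u| < δ → f u ≤ K) (R : ℝ) : ∃ C, ∀ r, |r| < R → C ≤ f r := by
  obtain ⟨C, hC⟩ := exists_forall_abs_lt_le_of_subadditive hf hδ hK R
  refine ⟨f 0 - C, fun r hr => ?_⟩
  have h0 : f 0 ≤ f r + f (-r) := by simpa using hf r (-r)
  linarith [hC (-r) (by rwa [abs_neg])]

lemma div_le_div_of_subadditive (hf : ∀ u v, f (u + v) ≤ f u + f v) {δ K : ℝ} (hδ : 0 < δ)
    (hK : ∀ u, |u| < δ → f u ≤ K) {s t : ℝ} (hs : s < 0) (ht : 0 < t) :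
    f s / s ≤ f t / t := by
  obtain ⟨L, hL⟩ := exists_forall_abs_lt_ge_of_subadditive hf hδ hK t
  have hbound : ∀ m : ℕ, 0 < m → t * L - t * |f t| ≤ m * (t * f s - s * f t) := by
    intro m hm
    set n := ⌈-(m * s) / t⌉₊
    have hms : 0 < -(m * s) := by
      have : (0 : ℝ) < m := by exact_mod_cast hm
      nlinarith
    have hn_ge : -(m * s) ≤ n * t := (div_le_iff₀ ht).mp (Nat.le_ceil _)
    have hn_lt : n * t < -(m * s) + t := by
      have := mul_lt_mul_of_pos_right (Nat.ceil_lt_add_one (div_nonneg hms.le ht.le)) ht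
      rwa [add_mul, div_mul_cancel₀ _ ht.ne', one_mul] at this
    have hn : 0 < n := by
      have : (0 : ℝ) < n := pos_of_mul_pos_left (hms.trans_le hn_ge) ht.le
      exact_mod_cast this
    have hr : |m * s + n * t| < t := abs_lt.mpr ⟨by linarith, by linarith⟩
    have hfr : f (m * s + n * t) ≤ m * f s + n * f t :=
      (hf _ _).trans (add_le_add (natCast_mul_le_of_subadditive hf hm s)
        (natCast_mul_le_of_subadditive hf hn t))
    have hrft : (m * s + n * t) * f t ≤ t * |f t| := by
      refine (le_abs_self _).trans ?_
      rw [abs_mul]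
      exact mul_le_mul_of_nonneg_right hr.le (abs_nonneg _)
    nlinarith [hL _ hr]
  have hkey : 0 ≤ t * f s - s * f t := nonneg_of_forall_natCast_mul_ge hbound
  rw [div_le_iff_of_neg hs, div_mul_eq_mul_div, div_le_iff₀ ht]
  linarith

end Subadditive

lemma Submult.log_comp_exp_add_le {ρ : ℝ → ℝ} (hsub : Submult ρ)
    (hpos : ∀ x, 0 < x → 0 < ρ x) (u v : ℝ) :
    Real.log (ρ (Real.exp (u + v))) ≤
      Real.log (ρ (Real.exp u)) + Real.log (ρ (Real.exp v)) := by
  rw [← Real.log_mul (hpos _ (Real.exp_pos u)).ne' (hpos _ (Real.exp_pos v)).ne', Real.exp_add]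
  exact Real.log_le_log (hpos _ (by positivity)) (hsub _ _ (Real.exp_pos u) (Real.exp_pos v))

lemma RegularFn.exists_log_comp_exp_le {ρ : ℝ → ℝ} (hreg : RegularFn ρ)
    (hpos : ∀ x, 0 < x → 0 < ρ x) :
    ∃ δ > 0, ∃ K, ∀ u, |u| < δ → Real.log (ρ (Real.exp u)) ≤ K := by
  obtain ⟨ε, hε, M, hM⟩ := hreg
  obtain ⟨δ, hδ, hexp⟩ :=
    Metric.continuousAt_iff.mp (Real.continuous_exp.continuousAt (x := 0)) ε hε
  refine ⟨δ, hδ, Real.log M, fun u hu => Real.log_le_log (hpos _ (Real.exp_pos u)) (hM _ ?_)⟩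
  simpa [Real.dist_eq] using hexp (by simpa [Real.dist_eq] using hu)

/-- If `ρ` is regular and submultiplicative, then `-∞ < α(ρ) ≤ β(ρ) < +∞`: the set defining
`α(ρ)` is bounded above, the set defining `β(ρ)` is bounded below, and `α(ρ) ≤ β(ρ)`. -/
theorem alphaIdx_le_betaIdx (ρ : ℝ → ℝ) (hpos : ∀ x : ℝ, 0 < x → 0 < ρ x)
    (hsub : Submult ρ) (hreg : RegularFn ρ) :
    BddAbove ((fun x => Real.log (ρ x) / Real.log x) '' Ioo (0:ℝ) 1) ∧
    BddBelow ((fun x => Real.log (ρ x) / Real.log x) '' Ioi (1:ℝ)) ∧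
    alphaIdx ρ ≤ betaIdx ρ := by
  set g : ℝ → ℝ := fun x => Real.log (ρ x) / Real.log x
  obtain ⟨δ, hδ, K, hK⟩ := hreg.exists_log_comp_exp_le hpos
  have hle : ∀ a ∈ g '' Ioo 0 1, ∀ b ∈ g '' Ioi 1, a ≤ b := by
    rintro _ ⟨x, ⟨hx0, hx1⟩, rfl⟩ _ ⟨y, hy, rfl⟩
    simpa only [g, Real.exp_log hx0, Real.exp_log (one_pos.trans hy)] using
      div_le_div_of_subadditive (hsub.log_comp_exp_add_le hpos) hδ hK
        (Real.log_neg hx0 hx1) (Real.log_pos hy)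
  obtain ⟨a, ha⟩ := (nonempty_Ioo.mpr zero_lt_one).image g
  obtain ⟨b, hb⟩ := (nonempty_Ioi (a := (1 : ℝ))).image g
  exact ⟨⟨b, fun a' ha' => hle a' ha' b hb⟩, ⟨a, hle a ha⟩,
    csSup_le ⟨a, ha⟩ fun a' ha' => le_csInf ⟨b, hb⟩ (hle a' ha')⟩
end
end
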